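/- Let n ≥ 1 be an integer, t > 0, a ≥ 1, and let Q ⊆ ℂ^{2n} be compact. Then there exists a constant C > 0 such that for all ε ∈ [a^{-1}, a], all ξ ∈ ℝ and all (z,w) ∈ Q: ∫_ℝ |e^{2εη} W_t^+(z,w,ξ+iη)| dη ≤ C. -/

import Mathlib

open MeasureTheory Complex Filter Topology

noncomputable section

/-- The weight function with complex parameter `μ` (for `Re μ ≠ 0`):
`W_t^μ(x+iy, u+iv) = 4^n exp(μ(u·y - v·x)) (4π)^{-n} (μ/sinh(2tμ))^n
  exp(-μ·coth(2tμ)·(|y|²+|v|²))`. -/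
def WtC (n : ℕ) (t : ℝ) (mu : ℂ) (z w : Fin n → ℂ) : ℂ :=
  4 ^ n *
    Complex.exp (mu * ((((∑ j, (w j).re * (z j).im) - ∑ j, (w j).im * (z j).re : ℝ)) : ℂ)) *
    (((4 * Real.pi) ^ n)⁻¹ : ℝ) * (mu / Complex.sinh (2 * t * mu)) ^ n *
    Complex.exp (-(mu * (Complex.cosh (2 * t * mu) / Complex.sinh (2 * t * mu))) *
      (((∑ j, (z j).im ^ 2) + ∑ j, (w j).im ^ 2 : ℝ) : ℂ))

/-- The partial weight function `W_t^+`, defined with the choice `λ = 1 > 0`: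
`W_t^+(z,w,ζ) = (2π)^{-1} ∫_ℝ exp(2t(λ+is/2)²) exp(-2η(λ+is/2)) W_t^{λ+is/2}(z,w) ds`,
with `η = Im ζ` (the value is independent of the choice of `λ > 0`). -/
def Wplus (n : ℕ) (t : ℝ) (z w : Fin n → ℂ) (ζ : ℂ) : ℂ :=
  ((2 * Real.pi)⁻¹ : ℝ) *
    ∫ s : ℝ,
      Complex.exp (2 * t * ((1 : ℂ) + Complex.I * s / 2) ^ 2) *
        Complex.exp (-2 * (ζ.im : ℂ) * ((1 : ℂ) + Complex.I * s / 2)) *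
        WtC n t ((1 : ℂ) + Complex.I * s / 2) z w

/-!
For `Re μ > 0` the integrand of `W_t^+` is holomorphic in `μ`, and on every vertical strip it
decays like a Gaussian in `Im μ`, uniformly for `(z, w)` in a compact set. Cauchy's theorem
therefore moves the line of integration to any abscissa `λ > 0`, which gives
`|W_t^+(z, w, ξ + iη)| ≤ M_λ e^{-2λη}`. Taking `λ = a + 1` for `η ≥ 0` and `λ = 1/(2a)` for
`η ≤ 0` gives `e^{2εη} |W_t^+| ≤ M e^{-|η|/a}` for every `ε ∈ [1/a, a]`, and the right-hand
side is integrable in `η`.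
-/

open scoped Interval Real

namespace Complex

lemma abs_sinh_re_le_norm_sinh (z : ℂ) : |Real.sinh z.re| ≤ ‖sinh z‖ := by
  have h : sinh z = sinh z.re * cos z.im + cosh z.re * sin z.im * I := by
    conv_lhs => rw [← re_add_im z, sinh_add, sinh_mul_I, cosh_mul_I]
    ring
  have hre : (sinh z).re = Real.sinh z.re * Real.cos z.im := by
    rw [h]; simp [← ofReal_sinh, ← ofReal_cosh, ← ofReal_sin, ← ofReal_cos]
  have him : (sinh z).im = Real.cosh z.re * Real.sin z.im := by
    rw [h]; simp [← ofReal_sinh, ← ofReal_cosh, ← ofReal_sin, ← ofReal_cos]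
  rw [← Real.sqrt_sq_eq_abs, norm_def, normSq_apply, hre, him]
  apply Real.sqrt_le_sqrt
  nlinarith [Real.sin_sq_add_cos_sq z.im, Real.cosh_sq z.re, sq_nonneg (Real.sin z.im)]

lemma norm_cosh_le_cosh_re (z : ℂ) : ‖cosh z‖ ≤ Real.cosh z.re := by
  have h : cosh z = cosh z.re * cos z.im + sinh z.re * sin z.im * I := by
    conv_lhs => rw [← re_add_im z, cosh_add, sinh_mul_I, cosh_mul_I]
    ring
  have hre : (cosh z).re = Real.cosh z.re * Real.cos z.im := by
    rw [h]; simp [← ofReal_sinh, ← ofReal_cosh, ← ofReal_sin, ← ofReal_cos]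
  have him : (cosh z).im = Real.sinh z.re * Real.sin z.im := by
    rw [h]; simp [← ofReal_sinh, ← ofReal_cosh, ← ofReal_sin, ← ofReal_cos]
  rw [← abs_of_pos (Real.cosh_pos z.re), ← Real.sqrt_sq_eq_abs, norm_def, normSq_apply, hre, him]
  apply Real.sqrt_le_sqrt
  nlinarith [Real.sin_sq_add_cos_sq z.im, Real.cosh_sq z.re, sq_nonneg (Real.sin z.im)]

variable {E : Type*} [NormedAddCommGroup E] [NormedSpace ℂ E]

theorem integral_vertical_line_eq_of_differentiableOn {F : ℂ → E} {G : ℝ → ℝ} {x₀ x₁ : ℝ}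
    (hF : DifferentiableOn ℂ F (re ⁻¹' [[x₀, x₁]]))
    (hFG : ∀ μ : ℂ, μ.re ∈ [[x₀, x₁]] → ‖F μ‖ ≤ G μ.im)
    (hG : Integrable G) (hG_lim : Tendsto G (cocompact ℝ) (𝓝 0)) :
    ∫ y : ℝ, F (x₀ + y * I) = ∫ y : ℝ, F (x₁ + y * I) := by
  have hline : ∀ x ∈ [[x₀, x₁]], Integrable (fun y : ℝ => F (x + y * I)) := fun x hx =>
    hG.mono' ((hF.continuousOn.comp_continuous (by fun_prop) fun y => by simpa using hx)
      |>.aestronglyMeasurable) (ae_of_all _ fun y => by simpa using hFG (x + y * I) (by simpa))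
  set H : ℝ → E := fun T => ∫ x : ℝ in x₀..x₁, F (x + T * I)
  have hH : Tendsto H (cocompact ℝ) (𝓝 0) := by
    refine squeeze_zero_norm (fun T => ?_) (by simpa using hG_lim.mul_const |x₁ - x₀|)
    refine intervalIntegral.norm_integral_le_of_norm_le_const fun x hx => ?_
    simpa using hFG (x + T * I) (by simpa using Set.uIoc_subset_uIcc hx)
  set V : ℝ → E := fun T =>
    (∫ y : ℝ in (-T)..T, F (x₁ + y * I)) - ∫ y : ℝ in (-T)..T, F (x₀ + y * I)
  -- Cauchy's theorem on the rectangle with corners `x₀ - T i` and `x₁ + T i`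
  have hV : ∀ T, V T = I • (H (-T) - H T) := by
    intro T
    have := integral_boundary_rect_eq_zero_of_differentiableOn F (x₀ - T * I) (x₁ + T * I)
      (hF.mono fun μ hμ => by simpa using hμ.1)
    simp only [sub_re, add_re, ofReal_re, mul_re, I_re, I_im, ofReal_im, sub_im, add_im,
      mul_im] at this
    norm_num at this
    simp only [V, H, ofReal_neg, neg_mul]
    have hI := congrArg (I • ·) this
    simp only [smul_sub, smul_add, smul_smul, I_mul_I, neg_one_smul, smul_zero] at hI
    linear_combination (norm := module) -hI
  have hV_lim : Tendsto V atTop (𝓝 0) := by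
    have h := ((hH.mono_left atBot_le_cocompact |>.comp tendsto_neg_atTop_atBot).sub
      (hH.mono_left atTop_le_cocompact)).const_smul I
    rw [show V = _ from funext hV]
    simpa using h
  have hV_int : Tendsto V atTop (𝓝 ((∫ y : ℝ, F (x₁ + y * I)) - ∫ y : ℝ, F (x₀ + y * I))) :=
    (intervalIntegral_tendsto_integral (hline x₁ Set.right_mem_uIcc) tendsto_neg_atTop_atBot
      tendsto_id).sub
    (intervalIntegral_tendsto_integral (hline x₀ Set.left_mem_uIcc) tendsto_neg_atTop_atBot
      tendsto_id)
  exact (sub_eq_zero.1 (tendsto_nhds_unique hV_int hV_lim)).symm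

end Complex

theorem integrable_exp_neg_mul_abs {b : ℝ} (hb : 0 < b) :
    Integrable fun x : ℝ => Real.exp (-b * |x|) := by
  rw [← integrableOn_univ, ← Set.Iic_union_Ioi (a := 0)]
  refine IntegrableOn.union
    ((integrableOn_exp_mul_Iic hb 0).congr_fun (fun x hx => ?_) measurableSet_Iic)
    ((exp_neg_integrableOn_Ioi 0 hb).congr_fun (fun x hx => ?_) measurableSet_Ioi)
  · rw [abs_of_nonpos hx, mul_neg, neg_mul, neg_neg]
  · rw [abs_of_pos hx]

theorem norm_cexp_two_mul_sq_mul_exp_le {c L x₁ : ℝ} (hc : 0 < c) (hL : 0 ≤ L) {μ : ℂ}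
    (hμ : |μ.re| ≤ x₁) :
    ‖cexp (2 * c * μ ^ 2)‖ * Real.exp (‖μ‖ * L) ≤
      Real.exp (2 * c * x₁ ^ 2 + L * x₁ + L ^ 2 / (4 * c)) * Real.exp (-c * μ.im ^ 2) := by
  have hre : (2 * c * μ ^ 2 : ℂ).re = 2 * c * (μ.re ^ 2 - μ.im ^ 2) := by
    simp [sq, mul_re]
  have hnorm : ‖μ‖ ≤ x₁ + |μ.im| := (norm_le_abs_re_add_abs_im μ).trans (by linarith)
  have hsq : μ.re ^ 2 ≤ x₁ ^ 2 := sq_le_sq' (abs_le.1 hμ).1 (abs_le.1 hμ).2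
  have hlin : L * |μ.im| ≤ L ^ 2 / (4 * c) + c * μ.im ^ 2 := by
    rw [← sq_abs μ.im, div_add' _ _ _ (by positivity), le_div_iff₀ (by positivity)]
    nlinarith [sq_nonneg (2 * c * |μ.im| - L)]
  rw [norm_exp, hre, ← Real.exp_add, ← Real.exp_add, Real.exp_le_exp]
  nlinarith [mul_le_mul_of_nonneg_right hnorm hL, mul_le_mul_of_nonneg_left hsq hc.le]

def symplecticPairing {n : ℕ} (z w : Fin n → ℂ) : ℝ :=
  (∑ j, (w j).re * (z j).im) - ∑ j, (w j).im * (z j).re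

def imNormSq {n : ℕ} (z w : Fin n → ℂ) : ℝ :=
  (∑ j, (z j).im ^ 2) + ∑ j, (w j).im ^ 2

lemma imNormSq_nonneg {n : ℕ} (z w : Fin n → ℂ) : 0 ≤ imNormSq z w := by
  unfold imNormSq; positivity

lemma WtC_eq {n : ℕ} (t : ℝ) (μ : ℂ) (z w : Fin n → ℂ) :
    WtC n t μ z w = 4 ^ n * cexp (μ * symplecticPairing z w) * (((4 * π) ^ n)⁻¹ : ℝ) *
      (μ / sinh (2 * t * μ)) ^ n *
      cexp (-(μ * (cosh (2 * t * μ) / sinh (2 * t * μ))) * imNormSq z w) := rfl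

theorem norm_WtC_le {n : ℕ} {t x₀ x₁ A₀ B₀ : ℝ} {z w : Fin n → ℂ} {μ : ℂ} (ht : 0 < t)
    (hx₀ : 0 < x₀) (hμ : μ.re ∈ Set.Icc x₀ x₁) (hA : |symplecticPairing z w| ≤ A₀)
    (hB : imNormSq z w ≤ B₀) :
    ‖WtC n t μ z w‖ ≤ (π * Real.sinh (2 * t * x₀))⁻¹ ^ n *
      Real.exp (‖μ‖ * (n + A₀ + Real.cosh (2 * t * x₁) / Real.sinh (2 * t * x₀) * B₀)) := by
  set s₀ := Real.sinh (2 * t * x₀)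
  set c₁ := Real.cosh (2 * t * x₁)
  have hre : (2 * t * μ : ℂ).re = 2 * t * μ.re := by simp
  have hs₀ : 0 < s₀ := Real.sinh_pos_iff.2 (by positivity)
  have hsinh : s₀ ≤ ‖sinh (2 * t * μ)‖ := by
    refine le_trans ?_ (abs_sinh_re_le_norm_sinh _)
    rw [hre, abs_of_pos (Real.sinh_pos_iff.2 (by nlinarith [hμ.1]))]
    exact Real.sinh_le_sinh.2 (by nlinarith [hμ.1])
  have hcosh : ‖cosh (2 * t * μ)‖ ≤ c₁ := by
    refine (norm_cosh_le_cosh_re _).trans ?_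
    rw [hre, Real.cosh_le_cosh, abs_of_nonneg (by nlinarith [hμ.1]),
      abs_of_nonneg (by nlinarith [hμ.1, hμ.2])]
    nlinarith [hμ.2]
  have h_phase : ‖cexp (μ * symplecticPairing z w)‖ ≤ Real.exp (‖μ‖ * A₀) := by
    rw [norm_exp]
    gcongr
    refine (re_le_norm _).trans ?_
    rw [norm_mul, norm_real, Real.norm_eq_abs]
    gcongr
  have h_ratio : ‖(μ / sinh (2 * t * μ)) ^ n‖ ≤ (Real.exp ‖μ‖ / s₀) ^ n := by
    rw [norm_pow, norm_div]
    gcongr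
    linarith [Real.add_one_le_exp ‖μ‖]
  have h_gauss : ‖cexp (-(μ * (cosh (2 * t * μ) / sinh (2 * t * μ))) * imNormSq z w)‖ ≤
      Real.exp (‖μ‖ * (c₁ / s₀ * B₀)) := by
    rw [norm_exp]
    gcongr
    refine (re_le_norm _).trans ?_
    rw [norm_mul, norm_neg, norm_mul, norm_div, norm_real,
      Real.norm_of_nonneg (imNormSq_nonneg z w), ← mul_assoc]
    gcongr
    exact imNormSq_nonneg z w
  calc ‖WtC n t μ z w‖
      = 4 ^ n * ‖cexp (μ * symplecticPairing z w)‖ * ((4 * π) ^ n)⁻¹ *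
          ‖(μ / sinh (2 * t * μ)) ^ n‖ *
          ‖cexp (-(μ * (cosh (2 * t * μ) / sinh (2 * t * μ))) * imNormSq z w)‖ := by
        rw [WtC_eq]
        simp only [norm_mul, norm_pow, norm_real, RCLike.norm_ofNat]
        rw [Real.norm_of_nonneg (by positivity)]
    _ ≤ 4 ^ n * Real.exp (‖μ‖ * A₀) * ((4 * π) ^ n)⁻¹ * (Real.exp ‖μ‖ / s₀) ^ n *
          Real.exp (‖μ‖ * (c₁ / s₀ * B₀)) := by gcongr
    _ = _ := by
        rw [div_pow, inv_pow, ← Real.exp_nat_mul, mul_add, mul_add, Real.exp_add, Real.exp_add]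
        field_simp
        ring

theorem exists_norm_cexp_mul_WtC_le {n : ℕ} {t x₀ x₁ : ℝ} (ht : 0 < t) (hx₀ : 0 < x₀)
    {Q : Set ((Fin n → ℂ) × (Fin n → ℂ))} (hQ : IsCompact Q) :
    ∃ K, 0 ≤ K ∧ ∀ q ∈ Q, ∀ μ : ℂ, μ.re ∈ Set.Icc x₀ x₁ →
      ‖cexp (2 * t * μ ^ 2) * WtC n t μ q.1 q.2‖ ≤ K * Real.exp (-t * μ.im ^ 2) := by
  obtain ⟨A₀, hA⟩ := hQ.exists_bound_of_continuousOn
    (f := fun q => symplecticPairing q.1 q.2) (by unfold symplecticPairing; fun_prop)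
  obtain ⟨B₀, hB⟩ := hQ.exists_bound_of_continuousOn
    (f := fun q => imNormSq q.1 q.2) (by unfold imNormSq; fun_prop)
  set L := n + max A₀ 0 + Real.cosh (2 * t * x₁) / Real.sinh (2 * t * x₀) * max B₀ 0
  have hL : 0 ≤ L := by
    have : 0 < Real.sinh (2 * t * x₀) := Real.sinh_pos_iff.2 (by positivity)
    positivity
  refine ⟨(π * Real.sinh (2 * t * x₀))⁻¹ ^ n * Real.exp (2 * t * x₁ ^ 2 + L * x₁ + L ^ 2 / (4 * t)),
    by positivity, fun q hq μ hμ => ?_⟩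
  have hWtC : ‖WtC n t μ q.1 q.2‖ ≤ (π * Real.sinh (2 * t * x₀))⁻¹ ^ n * Real.exp (‖μ‖ * L) :=
    norm_WtC_le ht hx₀ hμ ((hA q hq).trans (le_max_left _ _))
      ((le_abs_self _).trans ((hB q hq).trans (le_max_left _ _)))
  calc ‖cexp (2 * t * μ ^ 2) * WtC n t μ q.1 q.2‖
      ≤ ‖cexp (2 * t * μ ^ 2)‖ * ((π * Real.sinh (2 * t * x₀))⁻¹ ^ n * Real.exp (‖μ‖ * L)) :=
        (norm_mul_le _ _).trans (by gcongr)
    _ = (π * Real.sinh (2 * t * x₀))⁻¹ ^ n * (‖cexp (2 * t * μ ^ 2)‖ * Real.exp (‖μ‖ * L)) :=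
        mul_left_comm _ _ _
    _ ≤ (π * Real.sinh (2 * t * x₀))⁻¹ ^ n *
          (Real.exp (2 * t * x₁ ^ 2 + L * x₁ + L ^ 2 / (4 * t)) * Real.exp (-t * μ.im ^ 2)) :=
        mul_le_mul_of_nonneg_left (norm_cexp_two_mul_sq_mul_exp_le ht hL
          ((abs_of_pos (hx₀.trans_le hμ.1)).le.trans hμ.2)) (by positivity)
    _ = _ := (mul_assoc _ _ _).symm

def wplusIntegrand (n : ℕ) (t : ℝ) (z w : Fin n → ℂ) (η : ℝ) (μ : ℂ) : ℂ :=
  cexp (2 * t * μ ^ 2) * cexp (-2 * η * μ) * WtC n t μ z w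

lemma Wplus_eq_integral_wplusIntegrand (n : ℕ) (t : ℝ) (z w : Fin n → ℂ) (ζ : ℂ) :
    Wplus n t z w ζ =
      ((2 * π)⁻¹ : ℝ) * ∫ s : ℝ, wplusIntegrand n t z w ζ.im (1 + I * s / 2) := rfl

lemma norm_wplusIntegrand (n : ℕ) (t : ℝ) (z w : Fin n → ℂ) (η : ℝ) (μ : ℂ) :
    ‖wplusIntegrand n t z w η μ‖ =
      Real.exp (-2 * η * μ.re) * ‖cexp (2 * t * μ ^ 2) * WtC n t μ z w‖ := by
  rw [wplusIntegrand, mul_right_comm, norm_mul, mul_comm, norm_exp]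
  congr 2
  simp

theorem differentiableOn_wplusIntegrand {n : ℕ} {t : ℝ} (ht : 0 < t) (z w : Fin n → ℂ)
    (η : ℝ) : DifferentiableOn ℂ (wplusIntegrand n t z w η) {μ | 0 < μ.re} := by
  intro μ (hμ : 0 < μ.re)
  have hsinh : sinh (2 * t * μ) ≠ 0 := by
    have h := abs_sinh_re_le_norm_sinh (2 * t * μ)
    have hre : (2 * t * μ : ℂ).re = 2 * t * μ.re := by simp
    rw [hre, abs_of_pos (Real.sinh_pos_iff.2 (by positivity))] at h
    exact norm_pos_iff.1 ((Real.sinh_pos_iff.2 (by positivity)).trans_le h)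
  refine DifferentiableAt.differentiableWithinAt ?_
  unfold wplusIntegrand WtC
  fun_prop (disch := exact hsinh)

theorem Wplus_eq_integral_vertical_line {n : ℕ} {t lam : ℝ} (ht : 0 < t) (hlam : 0 < lam)
    (z w : Fin n → ℂ) (ζ : ℂ) :
    Wplus n t z w ζ = (π : ℂ)⁻¹ * ∫ y : ℝ, wplusIntegrand n t z w ζ.im (lam + y * I) := by
  set F := wplusIntegrand n t z w ζ.im
  have hscale : ∫ s : ℝ, F (1 + I * s / 2) = 2 * ∫ y : ℝ, F ((1 : ℝ) + y * I) := by
    have h := Measure.integral_comp_div (fun y : ℝ => F ((1 : ℝ) + y * I)) 2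
    simp only [abs_two, real_smul, ofReal_ofNat] at h
    rw [← h]
    congr 1 with s
    push_cast
    ring_nf
  obtain ⟨K, -, hK⟩ := exists_norm_cexp_mul_WtC_le (x₀ := min 1 lam) (x₁ := max 1 lam) ht
    (lt_min one_pos hlam) (isCompact_singleton (x := (z, w)))
  set G : ℝ → ℝ := fun y => Real.exp (2 * |ζ.im| * max 1 lam) * (K * Real.exp (-t * y ^ 2))
  have hG_lim : Tendsto G (cocompact ℝ) (𝓝 0) := by
    simpa [G] using ((tendsto_rpow_abs_mul_exp_neg_mul_sq_cocompact ht 0).const_mul K).const_mul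
      (Real.exp (2 * |ζ.im| * max 1 lam))
  have hshift := Complex.integral_vertical_line_eq_of_differentiableOn (F := F) (G := G)
    (x₀ := 1) (x₁ := lam)
    ((differentiableOn_wplusIntegrand ht z w ζ.im).mono fun μ (hμ : μ.re ∈ [[1, lam]]) =>
      (lt_min one_pos hlam).trans_le hμ.1)
    (fun μ hμ => by
      rw [norm_wplusIntegrand]
      refine mul_le_mul (Real.exp_le_exp.2 ?_) (hK (z, w) rfl μ hμ) (norm_nonneg _)
        (Real.exp_pos _).le
      nlinarith [neg_abs_le ζ.im, abs_nonneg ζ.im, (lt_min one_pos hlam).trans_le hμ.1, hμ.2])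
    (((integrable_exp_neg_mul_sq ht).const_mul K).const_mul _)
    hG_lim
  rw [Wplus_eq_integral_wplusIntegrand, hscale, hshift, ← mul_assoc]
  congr 1
  push_cast
  field_simp

theorem exists_norm_Wplus_le {n : ℕ} {t lam : ℝ} (ht : 0 < t) (hlam : 0 < lam)
    {Q : Set ((Fin n → ℂ) × (Fin n → ℂ))} (hQ : IsCompact Q) :
    ∃ M, 0 ≤ M ∧ ∀ q ∈ Q, ∀ ζ : ℂ, ‖Wplus n t q.1 q.2 ζ‖ ≤ M * Real.exp (-2 * lam * ζ.im) := by
  obtain ⟨K, hK0, hK⟩ := exists_norm_cexp_mul_WtC_le (x₀ := lam) (x₁ := lam) ht hlam hQ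
  refine ⟨π⁻¹ * (K * √(π / t)), by positivity, fun q hq ζ => ?_⟩
  rw [Wplus_eq_integral_vertical_line ht hlam, norm_mul, norm_inv, norm_real,
    Real.norm_of_nonneg Real.pi_pos.le]
  calc π⁻¹ * ‖∫ y : ℝ, wplusIntegrand n t q.1 q.2 ζ.im (lam + y * I)‖
      ≤ π⁻¹ * ∫ y : ℝ, Real.exp (-2 * ζ.im * lam) * (K * Real.exp (-t * y ^ 2)) := by
        gcongr
        refine norm_integral_le_of_norm_le
          (((integrable_exp_neg_mul_sq ht).const_mul K).const_mul _) (ae_of_all _ fun y => ?_)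
        rw [norm_wplusIntegrand]
        simpa using mul_le_mul_of_nonneg_left (hK q hq (lam + y * I) (by simp))
          (Real.exp_pos (-2 * ζ.im * lam)).le
    _ = π⁻¹ * (K * √(π / t)) * Real.exp (-2 * lam * ζ.im) := by
        rw [integral_const_mul, integral_const_mul, integral_gaussian]
        ring_nf

theorem norm_exp_mul_le_of_norm_le {W : ℂ} {M ε lam η b : ℝ} (hM : 0 ≤ M)
    (hW : ‖W‖ ≤ M * Real.exp (-2 * lam * η)) (hexp : 2 * ε * η - 2 * lam * η ≤ -b * |η|) :
    ‖(Real.exp (2 * ε * η) : ℂ) * W‖ ≤ M * Real.exp (-b * |η|) := by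
  rw [norm_mul, norm_real, Real.norm_of_nonneg (Real.exp_pos _).le]
  calc Real.exp (2 * ε * η) * ‖W‖ ≤ Real.exp (2 * ε * η) * (M * Real.exp (-2 * lam * η)) := by
        gcongr
    _ = M * Real.exp (2 * ε * η - 2 * lam * η) := by
        rw [sub_eq_add_neg, Real.exp_add]; ring_nf
    _ ≤ M * Real.exp (-b * |η|) := by gcongr

theorem norm_exp_mul_le_exp_neg_abs {W : ℂ} {a ε η M₁ M₂ : ℝ} (ha : 1 ≤ a)
    (hε : ε ∈ Set.Icc a⁻¹ a) (hM₁ : 0 ≤ M₁) (hM₂ : 0 ≤ M₂)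
    (hW₁ : ‖W‖ ≤ M₁ * Real.exp (-2 * (a + 1) * η))
    (hW₂ : ‖W‖ ≤ M₂ * Real.exp (-2 * (2 * a)⁻¹ * η)) :
    ‖(Real.exp (2 * ε * η) : ℂ) * W‖ ≤ (M₁ + M₂) * Real.exp (-a⁻¹ * |η|) := by
  have ha_inv : a⁻¹ ≤ 1 := inv_le_one_of_one_le₀ ha
  rcases le_total 0 η with hη | hη
  · refine (norm_exp_mul_le_of_norm_le hM₁ hW₁ ?_).trans
      (mul_le_mul_of_nonneg_right (by linarith) (Real.exp_pos _).le)
    rw [abs_of_nonneg hη]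
    nlinarith [hε.2]
  · refine (norm_exp_mul_le_of_norm_le hM₂ hW₂ ?_).trans
      (mul_le_mul_of_nonneg_right (by linarith) (Real.exp_pos _).le)
    rw [abs_of_nonpos hη, mul_inv]
    nlinarith [hε.1]

theorem partial_weight_uniform_bound_general
    (n : ℕ) (t : ℝ) (ht : 0 < t) (a : ℝ) (ha : 1 ≤ a)
    (Q : Set ((Fin n → ℂ) × (Fin n → ℂ))) (hQ : IsCompact Q) :
    ∃ C : ℝ, 0 < C ∧ ∀ ε ∈ Set.Icc a⁻¹ a, ∀ ξ : ℝ, ∀ q ∈ Q,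
      (∫ η : ℝ, ‖((Real.exp (2 * ε * η) : ℝ) : ℂ) *
          Wplus n t q.1 q.2 ((ξ : ℂ) + (η : ℂ) * Complex.I)‖) ≤ C := by
  have ha₀ : 0 < a := one_pos.trans_le ha
  -- shift far to the right for `η ≥ 0` and close to the imaginary axis for `η ≤ 0`
  obtain ⟨M₁, hM₁, hW₁⟩ := exists_norm_Wplus_le (lam := a + 1) ht (by linarith) hQ
  obtain ⟨M₂, hM₂, hW₂⟩ := exists_norm_Wplus_le (lam := (2 * a)⁻¹) ht (by positivity) hQ
  set g : ℝ → ℝ := fun η => (M₁ + M₂) * Real.exp (-a⁻¹ * |η|)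
  have hg : Integrable g := (integrable_exp_neg_mul_abs (inv_pos.2 ha₀)).const_mul _
  refine ⟨(∫ η, g η) + 1,
    add_pos_of_nonneg_of_pos (integral_nonneg fun η => by positivity) one_pos,
    fun ε hε ξ q hq => ?_⟩
  have hpt (η : ℝ) : ‖((Real.exp (2 * ε * η) : ℝ) : ℂ) *
      Wplus n t q.1 q.2 ((ξ : ℂ) + (η : ℂ) * Complex.I)‖ ≤ g η := by
    have h₁ := hW₁ q hq ((ξ : ℂ) + (η : ℂ) * Complex.I)
    have h₂ := hW₂ q hq ((ξ : ℂ) + (η : ℂ) * Complex.I)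
    simp only [add_im, ofReal_im, mul_im, ofReal_re, I_im, I_re, mul_zero, mul_one, zero_add,
      add_zero]
      at h₁ h₂
    exact norm_exp_mul_le_exp_neg_abs ha hε hM₁ hM₂ h₁ h₂
  exact (integral_mono_of_nonneg (ae_of_all _ fun _ => norm_nonneg _) hg (ae_of_all _ hpt)).trans
    (le_add_of_nonneg_right zero_le_one)

/-- For `a ≥ 1` and `Q ⊆ ℂ^{2n}` compact there is a constant `C > 0` such
that for all `ε ∈ [a⁻¹, a]`, `ξ ∈ ℝ` and `(z,w) ∈ Q`:
`∫_ℝ |e^{2εη} W_t^+(z,w,ξ+iη)| dη ≤ C`. -/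
theorem partial_weight_uniform_bound
    (n : ℕ) (hn : 1 ≤ n) (t : ℝ) (ht : 0 < t) (a : ℝ) (ha : 1 ≤ a)
    (Q : Set ((Fin n → ℂ) × (Fin n → ℂ))) (hQ : IsCompact Q) :
    ∃ C : ℝ, 0 < C ∧ ∀ ε ∈ Set.Icc a⁻¹ a, ∀ ξ : ℝ, ∀ q ∈ Q,
      (∫ η : ℝ, ‖((Real.exp (2 * ε * η) : ℝ) : ℂ) *
          Wplus n t q.1 q.2 ((ξ : ℂ) + (η : ℂ) * Complex.I)‖) ≤ C :=
  partial_weight_uniform_bound_general n t ht a ha Q hQ
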